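/- There exists a universal constant C₀ > 0 with the following property. Let F(x) = xᵗAx + Bx + C be a quadratic form on ℝ^d with A real symmetric, ‖A‖₂/D ≤ 1 and ‖B‖/D ≤ 1 for some D > 0, and consider the noisy oracle returning F(x) + D·N(0,1) independently at each call. Fix a coordinate i, let K ≥ 1, and let f_{−e_i,e_i} = (1/K²)·Σ_{1 ≤ j,l ≤ K} 1{F(−e_i) + D·G_j < F(e_i) + D·G'_l} with G_1,…,G_K,G'_1,…,G'_K independent standard Gaussians. Define B̂_i(D) = h₅(f_{−e_i,e_i})/√2, where h₅ is the clamped inverse of Φ on [−5,5]. Then E[(B̂_i(D) − B_i/D)²] ≤ C₀/K. -/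

import Mathlib

open Matrix MeasureTheory ProbabilityTheory

universe u

/-- The cumulative distribution function of the standard Gaussian distribution `N(0,1)`. -/
noncomputable def stdGaussCDF : ℝ → ℝ := fun t => ProbabilityTheory.cdf (gaussianReal 0 1) t

/-- `h` is the clamped inverse of the standard Gaussian CDF `Φ` on `[−c, c]`. -/
def IsClampedGaussInv (c : ℝ) (h : ℝ → ℝ) : Prop :=
  (∀ t ∈ Set.Icc (-c) c, h (stdGaussCDF t) = t) ∧
  (∀ x, x < stdGaussCDF (-c) → h x = -c) ∧
  (∀ x, stdGaussCDF c < x → h x = c)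

/-- The Euclidean norm of a vector of `ℝ^d`. -/
noncomputable def evnorm {d : ℕ} (v : Fin d → ℝ) : ℝ :=
  Real.sqrt (∑ i, v i ^ 2)

/-- The operator norm of a real matrix, induced by the Euclidean norm. -/
noncomputable def l2OpNorm {d : ℕ} (M : Matrix (Fin d) (Fin d) ℝ) : ℝ :=
  ‖(Matrix.toEuclideanCLM (𝕜 := ℝ) M : EuclideanSpace ℝ (Fin d) →L[ℝ] EuclideanSpace ℝ (Fin d))‖

/-- The quadratic form `F(x) = xᵗAx + Bx + C` on `ℝ^d`. -/
noncomputable def quadForm {d : ℕ} (A : Matrix (Fin d) (Fin d) ℝ) (B : Fin d → ℝ) (C : ℝ)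
    (x : Fin d → ℝ) : ℝ :=
  x ⬝ᵥ A.mulVec x + B ⬝ᵥ x + C

/-- The empirical comparison frequency of `K` noisy evaluations (with noise standard
deviation `D`) at two points with exact fitness values `fx` and `fy`. -/
noncomputable def noisyCompFreq {Ω : Type u} (K : ℕ) (fx fy D : ℝ)
    (G G' : Fin K → Ω → ℝ) (ω : Ω) : ℝ :=
  (1 / (K : ℝ) ^ 2) * ∑ j : Fin K, ∑ l : Fin K,
    if fx + D * G j ω < fy + D * G' l ω then (1 : ℝ) else 0

/-! The frequency `f = f_{−e_i,e_i}` is the mean of the `K²` indicators `1{G_j − G'_l < 2B_i/D}`.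
Each has mean `p = Φ(√2 B_i/D)`, because `(G_j − G'_l)/√2` is standard Gaussian, and two of them
sharing no index are independent, so only the `2K³` pairs sharing an index contribute to the
variance: `Var f ≤ 1/(2K)`. As `|√2 B_i/D| ≤ √2 ≤ 5`, `h₅(p)/√2 = B_i/D`, and `h₅` is
`1/φ(5)`-Lipschitz since `Φ' = φ ≥ φ(5)` on `[−5, 5]`; so the mean squared error is at most
`Var f/(2φ(5)²) ≤ 1/(4φ(5)²K)`. -/

open Set

lemma sum_prod_ite_fst_eq_card {ι κ : Type*} [Fintype ι] [Fintype κ] [DecidableEq ι] (i : ι) :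
    ∑ q : ι × κ, (if i = q.1 then (1 : ℝ) else 0) = Fintype.card κ := by
  rw [Fintype.sum_prod_type, Finset.sum_comm]
  simp

lemma sum_prod_ite_snd_eq_card {ι κ : Type*} [Fintype ι] [Fintype κ] [DecidableEq κ] (k : κ) :
    ∑ q : ι × κ, (if k = q.2 then (1 : ℝ) else 0) = Fintype.card ι := by
  rw [Fintype.sum_prod_type]
  simp

namespace ProbabilityTheory

lemma continuous_cdf (μ : Measure ℝ) [IsProbabilityMeasure μ] [NullSingletonClass μ] :
    Continuous (cdf μ) := by
  refine continuous_iff_continuousAt.2 fun x => ?_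
  rw [(monotone_cdf μ).continuousAt_iff_leftLim_eq_rightLim, StieltjesFunction.rightLim_eq]
  have h := (cdf μ).measure_singleton x
  rw [measure_cdf, measure_singleton, eq_comm, ENNReal.ofReal_eq_zero] at h
  exact le_antisymm ((monotone_cdf μ).leftLim_le le_rfl) (sub_nonpos.1 h)

lemma cdf_sub_cdf (μ : Measure ℝ) [IsProbabilityMeasure μ] {s t : ℝ} (hst : s ≤ t) :
    cdf μ t - cdf μ s = μ.real (Ioc s t) := by
  have h := (cdf μ).measure_Ioc s t
  rw [measure_cdf] at h
  rw [measureReal_def, h, ENNReal.toReal_ofReal (sub_nonneg.2 (monotone_cdf μ hst))]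

variable {Ω : Type*} {mΩ : MeasurableSpace Ω} {μ : Measure Ω}

lemma HasLaw.measureReal_lt_eq_stdGaussCDF {X : Ω → ℝ} (hX : HasLaw X (gaussianReal 0 1) μ)
    (t : ℝ) : μ.real {ω | X ω < t} = stdGaussCDF t := by
  have := nullSingletonClass_gaussianReal (μ := 0) one_ne_zero
  rw [hX.measureReal_eq measurableSet_Iio, stdGaussCDF, cdf_eq_real]
  exact measureReal_congr Iio_ae_eq_Iic

lemma IndepFun.hasLaw_sub_div_sqrt_two {X Y : Ω → ℝ} (hX : HasLaw X (gaussianReal 0 1) μ)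
    (hY : HasLaw Y (gaussianReal 0 1) μ) (hXY : IndepFun X Y μ) :
    HasLaw (fun ω => (X ω - Y ω) / √2) (gaussianReal 0 1) μ := by
  have hnegY : HasLaw (-Y) (gaussianReal 0 1) μ := by simpa using gaussianReal_neg hY
  have hsum := (hXY.comp measurable_id measurable_neg).hasLaw_add hX hnegY
  rw [gaussianReal_conv_gaussianReal] at hsum
  convert gaussianReal_div_const hsum √2 using 2
  · simp [sub_eq_add_neg]
  · simp
  · ext; norm_num

variable [IsProbabilityMeasure μ]

lemma covariance_le_of_mem_Icc {X Y : Ω → ℝ} {a b : ℝ} (hX : AEMeasurable X μ)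
    (hY : AEMeasurable Y μ) (hXab : ∀ᵐ ω ∂μ, X ω ∈ Icc a b) (hYab : ∀ᵐ ω ∂μ, Y ω ∈ Icc a b) :
    cov[X, Y; μ] ≤ ((b - a) / 2) ^ 2 := by
  have hsub := variance_sub (memLp_of_bounded hXab hX.aestronglyMeasurable 2)
    (memLp_of_bounded hYab hY.aestronglyMeasurable 2)
  linarith [variance_nonneg (X - Y) μ, variance_le_sq_of_bounded hXab hX,
    variance_le_sq_of_bounded hYab hY]

theorem variance_sum_prod_le {ι κ : Type*} [Fintype ι] [Fintype κ] {Y : ι × κ → Ω → ℝ}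
    {a b : ℝ} (hY : ∀ q, AEMeasurable (Y q) μ) (hYab : ∀ q, ∀ᵐ ω ∂μ, Y q ω ∈ Icc a b)
    (hindep : ∀ q q', q.1 ≠ q'.1 → q.2 ≠ q'.2 → IndepFun (Y q) (Y q') μ) :
    Var[∑ q, Y q; μ] ≤
      Fintype.card ι * Fintype.card κ * (Fintype.card ι + Fintype.card κ) * ((b - a) / 2) ^ 2 := by
  classical
  have hL2 q : MemLp (Y q) 2 μ := memLp_of_bounded (hYab q) (hY q).aestronglyMeasurable 2
  have hcov q q' : cov[Y q, Y q'; μ] ≤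
      ((if q.1 = q'.1 then 1 else 0) + (if q.2 = q'.2 then 1 else 0)) * ((b - a) / 2) ^ 2 := by
    have hle := covariance_le_of_mem_Icc (hY q) (hY q') (hYab q) (hYab q')
    by_cases h₁ : q.1 = q'.1
    · split_ifs <;> nlinarith [sq_nonneg ((b - a) / 2)]
    by_cases h₂ : q.2 = q'.2
    · simp [h₁, h₂, hle]
    · simp [h₁, h₂, (hindep q q' h₁ h₂).covariance_eq_zero (hL2 q) (hL2 q')]
  calc Var[∑ q, Y q; μ] = ∑ q, ∑ q', cov[Y q, Y q'; μ] := variance_sum hL2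
    _ ≤ ∑ q : ι × κ, ∑ q' : ι × κ,
        ((if q.1 = q'.1 then 1 else 0) + (if q.2 = q'.2 then 1 else 0)) * ((b - a) / 2) ^ 2 :=
      Finset.sum_le_sum fun q _ => Finset.sum_le_sum fun q' _ => hcov q q'
    _ = _ := by
      simp only [← Finset.sum_mul, Finset.sum_add_distrib, sum_prod_ite_fst_eq_card,
        sum_prod_ite_snd_eq_card, Finset.sum_const, Finset.card_univ, Fintype.card_prod,
        nsmul_eq_mul]
      push_cast
      ring

lemma integral_sq_comp_sub_le {F : Ω → ℝ} (hF : MemLp F 2 μ) {g : ℝ → ℝ} {L : ℝ}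
    (hg : ∀ u v, |g u - g v| ≤ L * |u - v|) :
    ∫ ω, (g (F ω) - g μ[F]) ^ 2 ∂μ ≤ L ^ 2 * Var[F; μ] := by
  rw [variance_eq_integral hF.aemeasurable, ← integral_const_mul]
  refine integral_mono_of_nonneg (ae_of_all _ fun ω => sq_nonneg _)
    ((hF.sub (memLp_const _)).integrable_sq.const_mul _) (ae_of_all _ fun ω => ?_)
  calc (g (F ω) - g μ[F]) ^ 2 = |g (F ω) - g μ[F]| ^ 2 := (sq_abs _).symm
    _ ≤ (L * |F ω - μ[F]|) ^ 2 := pow_le_pow_left₀ (abs_nonneg _) (hg _ _) 2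
    _ = L ^ 2 * (F ω - μ[F]) ^ 2 := by rw [mul_pow, sq_abs]

end ProbabilityTheory

lemma gaussianPDFReal_le_of_abs_le {x y : ℝ} (hxy : |x| ≤ |y|) :
    gaussianPDFReal 0 1 y ≤ gaussianPDFReal 0 1 x := by
  simp only [gaussianPDFReal, sub_zero]
  have := sq_le_sq.2 hxy
  gcongr ?_ * Real.exp ?_
  simp only [NNReal.coe_one, mul_one]
  linarith

lemma monotone_stdGaussCDF : Monotone stdGaussCDF := monotone_cdf _

lemma continuous_stdGaussCDF : Continuous stdGaussCDF :=
  have := nullSingletonClass_gaussianReal (μ := 0) one_ne_zero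
  continuous_cdf _

lemma gaussianPDFReal_mul_sub_le_stdGaussCDF_sub {c s t : ℝ} (hs : -c ≤ s) (hst : s ≤ t)
    (ht : t ≤ c) : gaussianPDFReal 0 1 c * (t - s) ≤ stdGaussCDF t - stdGaussCDF s := by
  have hvol : volume.real (Ioc s t) = t - s := by simp [hst]
  rw [stdGaussCDF, stdGaussCDF, cdf_sub_cdf _ hst, measureReal_def,
    gaussianReal_apply_eq_integral 0 one_ne_zero, ENNReal.toReal_ofReal
      (setIntegral_nonneg measurableSet_Ioc fun x _ => gaussianPDFReal_nonneg 0 1 x), ← hvol,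
    mul_comm]
  refine setIntegral_ge_of_const_le measurableSet_Ioc (by simp) (fun x hx => ?_)
    (integrable_gaussianPDFReal 0 1).integrableOn
  exact gaussianPDFReal_le_of_abs_le (abs_le_abs (by linarith [hx.2]) (by linarith [hx.1]))

lemma gaussianPDFReal_mul_abs_sub_le_abs_stdGaussCDF_sub {c s t : ℝ} (hs : s ∈ Icc (-c) c)
    (ht : t ∈ Icc (-c) c) :
    gaussianPDFReal 0 1 c * |s - t| ≤ |stdGaussCDF s - stdGaussCDF t| := by
  rcases le_total s t with hst | hts
  · rw [abs_sub_comm, abs_of_nonneg (sub_nonneg.2 hst), abs_sub_comm,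
      abs_of_nonneg (sub_nonneg.2 (monotone_stdGaussCDF hst))]
    exact gaussianPDFReal_mul_sub_le_stdGaussCDF_sub hs.1 hst ht.2
  · rw [abs_of_nonneg (sub_nonneg.2 hts), abs_of_nonneg (sub_nonneg.2 (monotone_stdGaussCDF hts))]
    exact gaussianPDFReal_mul_sub_le_stdGaussCDF_sub ht.1 hts hs.2

namespace IsClampedGaussInv

variable {c : ℝ} {h : ℝ → ℝ}

lemma exists_eq_projIcc (hh : IsClampedGaussInv c h) (hc : 0 ≤ c) (u : ℝ) :
    ∃ t ∈ Icc (-c) c, h u = t ∧ stdGaussCDF t =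
      projIcc (stdGaussCDF (-c)) (stdGaussCDF c) (monotone_stdGaussCDF (by linarith)) u := by
  have hcc : -c ≤ c := by linarith
  obtain ⟨t, ht, hΦt⟩ := intermediate_value_Icc hcc continuous_stdGaussCDF.continuousOn
    (projIcc _ _ (monotone_stdGaussCDF hcc) u).2
  refine ⟨t, ht, ?_, hΦt⟩
  rcases lt_or_ge u (stdGaussCDF (-c)) with hu | hu
  · rw [projIcc_of_le_left _ hu.le] at hΦt
    rw [hh.2.1 u hu, ← hh.1 t ht, hΦt, hh.1 _ ⟨le_rfl, hcc⟩]
  rcases le_or_gt u (stdGaussCDF c) with hu' | hu'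
  · rw [projIcc_of_mem _ ⟨hu, hu'⟩] at hΦt
    rw [← hh.1 t ht, hΦt]
  · rw [projIcc_of_right_le _ hu'.le] at hΦt
    rw [hh.2.2 u hu', ← hh.1 t ht, hΦt, hh.1 _ ⟨hcc, le_rfl⟩]

theorem abs_sub_le (hh : IsClampedGaussInv c h) (hc : 0 ≤ c) (u v : ℝ) :
    |h u - h v| ≤ (gaussianPDFReal 0 1 c)⁻¹ * |u - v| := by
  obtain ⟨s, hs, rfl, hΦs⟩ := hh.exists_eq_projIcc hc u
  obtain ⟨t, ht, rfl, hΦt⟩ := hh.exists_eq_projIcc hc v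
  rw [← div_eq_inv_mul, le_div_iff₀' (gaussianPDFReal_pos 0 1 c one_ne_zero)]
  calc gaussianPDFReal 0 1 c * |h u - h v| ≤ |stdGaussCDF (h u) - stdGaussCDF (h v)| :=
        gaussianPDFReal_mul_abs_sub_le_abs_stdGaussCDF_sub hs ht
    _ ≤ |u - v| := by rw [hΦs, hΦt]; exact abs_projIcc_sub_projIcc _

lemma apply_stdGaussCDF_two_mul_div_sqrt_two (hh : IsClampedGaussInv c h) (hc : √2 ≤ c)
    {b : ℝ} (hb : |b| ≤ 1) : h (stdGaussCDF (2 * b / √2)) / √2 = b := by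
  have hs₀ : 0 < √2 := Real.sqrt_pos.2 two_pos
  have hmem : √2 * b ∈ Icc (-c) c := by
    refine abs_le.1 ?_
    rw [abs_mul, abs_of_pos hs₀]
    nlinarith [abs_nonneg b]
  have h2b : 2 * b / √2 = √2 * b := by
    rw [div_eq_iff hs₀.ne', mul_right_comm, Real.mul_self_sqrt zero_le_two]
  rw [h2b, hh.1 _ hmem, mul_div_cancel_left₀ _ hs₀.ne']

end IsClampedGaussInv

lemma noisyComparison_iff {D : ℝ} (hD : 0 < D) (fx fy a b : ℝ) :
    fx + D * a < fy + D * b ↔ (a - b) / √2 < (fy - fx) / (√2 * D) := by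
  rw [mul_comm √2 D, ← div_div, div_lt_div_iff_of_pos_right (by positivity), lt_div_iff₀ hD]
  constructor <;> intro h <;> linarith

section NoisyComparison

variable {Ω : Type u} {mΩ : MeasurableSpace Ω} {μ : Measure Ω} [IsProbabilityMeasure μ]
  {K : ℕ} {G G' : Fin K → Ω → ℝ}

lemma noisyCompFreq_eq_sum (fx fy D : ℝ) :
    noisyCompFreq K fx fy D G G' = fun ω => 1 / (K : ℝ) ^ 2 *
      ∑ q : Fin K × Fin K, if fx + D * G q.1 ω < fy + D * G' q.2 ω then (1 : ℝ) else 0 := by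
  funext ω
  rw [noisyCompFreq, Fintype.sum_prod_type]

lemma measurable_noisyComparison (fx fy D : ℝ) :
    Measurable fun z : ℝ × ℝ => if fx + D * z.1 < fy + D * z.2 then (1 : ℝ) else 0 :=
  Measurable.ite (measurableSet_lt (by fun_prop) (by fun_prop)) measurable_const measurable_const

lemma memLp_noisyCompFreq (hGm : ∀ j, Measurable (G j)) (hG'm : ∀ l, Measurable (G' l))
    (fx fy D : ℝ) : MemLp (noisyCompFreq K fx fy D G G') 2 μ := by
  rw [noisyCompFreq_eq_sum]
  refine (memLp_finsetSum _ fun q _ => memLp_of_bounded (a := 0) (b := 1) ?_ ?_ 2).const_mul _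
  · exact ae_of_all _ fun ω => by split_ifs <;> simp
  · exact ((measurable_noisyComparison fx fy D).comp
      ((hGm q.1).prodMk (hG'm q.2))).aestronglyMeasurable

theorem variance_noisyCompFreq_le (hGm : ∀ j, Measurable (G j)) (hG'm : ∀ l, Measurable (G' l))
    (hindep : iIndepFun (Sum.elim G G') μ) (fx fy D : ℝ) :
    Var[noisyCompFreq K fx fy D G G'; μ] ≤ 1 / (2 * K) := by
  rw [noisyCompFreq_eq_sum, variance_const_mul]
  rcases K.eq_zero_or_pos with rfl | hK
  · simp
  have hφ := measurable_noisyComparison fx fy D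
  have hmeas : ∀ x, Measurable (Sum.elim G G' x) := Sum.forall.2 ⟨hGm, hG'm⟩
  have hsum := variance_sum_prod_le (μ := μ) (a := 0) (b := 1)
    (Y := fun q ω => if fx + D * G q.1 ω < fy + D * G' q.2 ω then (1 : ℝ) else 0)
    (fun q => (hφ.comp ((hGm q.1).prodMk (hG'm q.2))).aemeasurable)
    (fun q => ae_of_all _ fun ω => by split_ifs <;> simp)
    (fun q q' h₁ h₂ => (hindep.indepFun_prodMk_prodMk hmeas (.inl q.1) (.inr q.2) (.inl q'.1)
      (.inr q'.2) (by simpa using h₁) Sum.inl_ne_inr Sum.inr_ne_inl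
      (by simpa using h₂)).comp hφ hφ)
  rw [Finset.sum_fn] at hsum
  refine (mul_le_mul_of_nonneg_left hsum (by positivity)).trans_eq ?_
  simp only [Fintype.card_fin]
  field_simp
  ring

theorem integral_noisyCompFreq (hK : K ≠ 0) (hGm : ∀ j, Measurable (G j))
    (hG'm : ∀ l, Measurable (G' l))
    (hG : ∀ j, μ.map (G j) = gaussianReal 0 1) (hG' : ∀ l, μ.map (G' l) = gaussianReal 0 1)
    (hindep : iIndepFun (Sum.elim G G') μ) {D : ℝ} (hD : 0 < D) (fx fy : ℝ) :
    ∫ ω, noisyCompFreq K fx fy D G G' ω ∂μ = stdGaussCDF ((fy - fx) / (√2 * D)) := by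
  set p := stdGaussCDF ((fy - fx) / (√2 * D))
  have hcomp (q : Fin K × Fin K) :
      (fun ω => if fx + D * G q.1 ω < fy + D * G' q.2 ω then (1 : ℝ) else 0) =
        {ω | (G q.1 ω - G' q.2 ω) / √2 < (fy - fx) / (√2 * D)}.indicator 1 := by
    ext ω
    simp only [noisyComparison_iff hD, Set.indicator_apply, Set.mem_ofPred_eq, Pi.one_apply]
  have hmeas (q : Fin K × Fin K) :
      MeasurableSet {ω | (G q.1 ω - G' q.2 ω) / √2 < (fy - fx) / (√2 * D)} :=
    measurableSet_lt (by fun_prop) measurable_const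
  have hmean (q : Fin K × Fin K) :
      ∫ ω, (if fx + D * G q.1 ω < fy + D * G' q.2 ω then (1 : ℝ) else 0) ∂μ = p := by
    rw [hcomp, integral_indicator_one (hmeas q)]
    exact (hindep.indepFun Sum.inl_ne_inr).hasLaw_sub_div_sqrt_two
      ⟨(hGm q.1).aemeasurable, hG q.1⟩ ⟨(hG'm q.2).aemeasurable, hG' q.2⟩
      |>.measureReal_lt_eq_stdGaussCDF _
  rw [noisyCompFreq_eq_sum, integral_const_mul, integral_finsetSum _ fun q _ => by
      rw [hcomp]; exact (integrable_const 1).indicator (hmeas q)]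
  simp only [hmean, Finset.sum_const, Finset.card_univ, Fintype.card_prod, Fintype.card_fin,
    nsmul_eq_mul]
  push_cast
  field_simp

end NoisyComparison

lemma abs_le_evnorm {d : ℕ} (v : Fin d → ℝ) (i : Fin d) : |v i| ≤ evnorm v := by
  rw [evnorm, ← Real.sqrt_sq_eq_abs]
  exact Real.sqrt_le_sqrt (Finset.single_le_sum (fun j _ => sq_nonneg (v j)) (Finset.mem_univ i))

lemma quadForm_single_sub_quadForm_neg_single {d : ℕ} (A : Matrix (Fin d) (Fin d) ℝ)
    (B : Fin d → ℝ) (C : ℝ) (i : Fin d) :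
    quadForm A B C (Pi.single i 1) - quadForm A B C (-Pi.single i 1) = 2 * B i := by
  simp only [quadForm, mulVec_neg, neg_dotProduct, dotProduct_neg, neg_neg, dotProduct_single,
    mul_one]
  ring

/-- Mean squared error of the CopQuad estimate `B̂_i(D) = h₅(f_{−e_i,e_i})/√2` of `B_i/D`:
there is a universal constant `C₀ > 0` such that, for every quadratic form with
`‖A‖₂/D ≤ 1` and `‖B‖/D ≤ 1` and every budget of `K` pairs of independent noisy
evaluations, `E[(B̂_i(D) − B_i/D)²] ≤ C₀/K`. -/
theorem copquad_linear_coefficient_mse :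
    ∃ C₀ : ℝ, 0 < C₀ ∧
      ∀ (Ω : Type u) [MeasurableSpace Ω] (μ : Measure Ω) [IsProbabilityMeasure μ]
        (d : ℕ) (A : Matrix (Fin d) (Fin d) ℝ) (B : Fin d → ℝ) (C D : ℝ), 0 < D →
        A.IsSymm → l2OpNorm A / D ≤ 1 → evnorm B / D ≤ 1 →
      ∀ (i : Fin d) (K : ℕ), 1 ≤ K →
      ∀ (G G' : Fin K → Ω → ℝ),
        (∀ j, Measurable (G j)) → (∀ l, Measurable (G' l)) →
        (∀ j, Measure.map (G j) μ = gaussianReal 0 1) →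
        (∀ l, Measure.map (G' l) μ = gaussianReal 0 1) →
        iIndepFun (Sum.elim G G') μ →
      ∀ (h : ℝ → ℝ), IsClampedGaussInv 5 h →
        ∫ ω, (h (noisyCompFreq K (quadForm A B C (-Pi.single i 1))
                  (quadForm A B C (Pi.single i 1)) D G G' ω) / Real.sqrt 2
              - B i / D) ^ 2 ∂μ
          ≤ C₀ / K := by
  set m := gaussianPDFReal 0 1 5
  have hm : 0 < m := gaussianPDFReal_pos 0 1 5 one_ne_zero
  refine ⟨(√2 * m)⁻¹ ^ 2 / 2, by positivity, ?_⟩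
  intro Ω _ μ _ d A B C D hD _ _ hB i K hK G G' hGm hG'm hG hG' hindep h hh
  set F := noisyCompFreq K (quadForm A B C (-Pi.single i 1)) (quadForm A B C (Pi.single i 1))
    D G G'
  have hBi : |B i / D| ≤ 1 := by
    rw [abs_div, abs_of_pos hD]
    exact (div_le_div_of_nonneg_right (abs_le_evnorm B i) hD.le).trans hB
  have hcenter : h μ[F] / √2 = B i / D := by
    rw [integral_noisyCompFreq (by omega) hGm hG'm hG hG' hindep hD,
      quadForm_single_sub_quadForm_neg_single,
      show 2 * B i / (√2 * D) = 2 * (B i / D) / √2 by ring]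
    exact hh.apply_stdGaussCDF_two_mul_div_sqrt_two (Real.sqrt_le_iff.2 (by norm_num)) hBi
  have hlip (u v : ℝ) : |h u / √2 - h v / √2| ≤ (√2 * m)⁻¹ * |u - v| := by
    have hs₀ : 0 < √2 := Real.sqrt_pos.2 two_pos
    rw [← sub_div, abs_div, abs_of_pos hs₀, div_le_iff₀ hs₀]
    calc |h u - h v| ≤ m⁻¹ * |u - v| := hh.abs_sub_le (by norm_num) u v
      _ = (√2 * m)⁻¹ * |u - v| * √2 := by field_simp
  calc ∫ ω, (h (F ω) / √2 - B i / D) ^ 2 ∂μ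
      = ∫ ω, (h (F ω) / √2 - h μ[F] / √2) ^ 2 ∂μ := by rw [hcenter]
    _ ≤ (√2 * m)⁻¹ ^ 2 * Var[F; μ] :=
      integral_sq_comp_sub_le (memLp_noisyCompFreq hGm hG'm _ _ _) hlip
    _ ≤ (√2 * m)⁻¹ ^ 2 * (1 / (2 * K)) := by
      gcongr
      exact variance_noisyCompFreq_le hGm hG'm hindep _ _ _
    _ = (√2 * m)⁻¹ ^ 2 / 2 / K := by ring
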